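/- arXiv:2408.12785 — 5 statements merged into one kernel-verified Lean document; each statement's English description precedes it below -/
import Mathlib

section
/- For every syndetic, idempotent filter 𝔉 on ℕ and every minimal left ideal L of the semigroup (βℕ, +) of ultrafilters on ℕ, there exists an idempotent ultrafilter 𝔭 ∈ L with 𝔉 ⊆ 𝔭 (i.e., every member of 𝔉 belongs to 𝔭). -/
open Set

/-- `A − n` computed inside the positive integers. -/
def shiftN (A : Set ℕ+) (n : ℕ+) : Set ℕ+ := {m : ℕ+ | m + n ∈ A}

/-- `A − B := ⋃_{b ∈ B} (A − b)`. -/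
def shiftSet (A B : Set ℕ+) : Set ℕ+ := ⋃ b ∈ B, shiftN A b

/-- A set of positive integers is syndetic if `A ∪ (A−1) ∪ ⋯ ∪ (A−N) = ℕ` for some `N`. -/
def Syndetic (A : Set ℕ+) : Prop :=
  ∃ N : ℕ+, (A ∪ ⋃ k ∈ {k : ℕ+ | k ≤ N}, shiftN A k) = Set.univ

/-- A set of positive integers is thick if it contains a translate of every finite set. -/
def Thick (A : Set ℕ+) : Prop :=
  ∀ F : Finset ℕ+, ∃ n : ℕ+, ∀ f ∈ F, f + n ∈ A

/-- Piecewise syndetic: some finite union of translates `A ∪ (A−1) ∪ ⋯ ∪ (A−N)` is thick. -/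
def PiecewiseSyndetic (A : Set ℕ+) : Prop :=
  ∃ N : ℕ+, Thick (A ∪ ⋃ k ∈ {k : ℕ+ | k ≤ N}, shiftN A k)

/-- A self-map of a topological space is minimal if every forward orbit
`{T^n x | n ∈ ℕ, n ≥ 1}` is dense. -/
def MinimalMap {X : Type} [TopologicalSpace X] (T : X → X) : Prop :=
  ∀ x : X, Dense (Set.range fun n : ℕ+ => T^[(n : ℕ)] x)

/-- A minimal topological dynamical system: a nonempty compact metric space together with a
continuous map all of whose forward orbits are dense. -/
structure MinSystem : Type 1 where
  X : Type
  [met : MetricSpace X]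
  [cpt : CompactSpace X]
  [nem : Nonempty X]
  T : X → X
  cont : Continuous T
  minimal : MinimalMap T

attribute [instance] MinSystem.met MinSystem.cpt MinSystem.nem

/-- `R(x,U)`: the set of (positive) return times of `x` to `U`. -/
def retTimes {X : Type} (T : X → X) (x : X) (U : Set X) : Set ℕ+ :=
  {n : ℕ+ | T^[(n : ℕ)] x ∈ U}

/-- Dynamically syndetic sets. -/
def DynSyndetic (A : Set ℕ+) : Prop :=
  ∃ (S : MinSystem) (x : S.X) (U : Set S.X),
    IsOpen U ∧ U.Nonempty ∧ retTimes S.T x U ⊆ A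

/-- Dynamically central syndetic sets. -/
def DynCentralSyndetic (A : Set ℕ+) : Prop :=
  ∃ (S : MinSystem) (x : S.X) (U : Set S.X),
    IsOpen U ∧ x ∈ U ∧ retTimes S.T x U ⊆ A

/-- Dynamically thick sets: `{T^n x | n ∈ A}` is dense for every minimal system and point. -/
def DynThick (A : Set ℕ+) : Prop :=
  ∀ (S : MinSystem) (x : S.X), Dense ((fun n : ℕ+ => S.T^[(n : ℕ)] x) '' A)

/-- Sets of (minimal topological) pointwise recurrence. -/
def PointwiseRecurrent (A : Set ℕ+) : Prop :=
  ∀ (S : MinSystem) (x : S.X) (U : Set S.X), IsOpen U → x ∈ U →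
    ∃ a ∈ A, S.T^[(a : ℕ)] x ∈ U

/-- A family: an upward-closed collection of subsets of the positive integers. -/
def UpwardClosed (F : Set (Set ℕ+)) : Prop :=
  ∀ ⦃A B : Set ℕ+⦄, A ∈ F → A ⊆ B → B ∈ F

/-- A filter (in the combinatorial sense): an upward-closed collection closed under
finite intersections. -/
def IsFilterFamily (F : Set (Set ℕ+)) : Prop :=
  UpwardClosed F ∧ ∀ ⦃A B : Set ℕ+⦄, A ∈ F → B ∈ F → A ∩ B ∈ F

/-- A family all of whose members are syndetic. -/
def SyndeticFamily (F : Set (Set ℕ+)) : Prop := ∀ A ∈ F, Syndetic A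

/-- `A − 𝔉 := {n | A − n ∈ 𝔉}`. -/
def famShift (A : Set ℕ+) (F : Set (Set ℕ+)) : Set ℕ+ := {n : ℕ+ | shiftN A n ∈ F}

/-- `𝔉 + 𝔊 := {A | A − 𝔊 ∈ 𝔉}`. -/
def famSum (F G : Set (Set ℕ+)) : Set (Set ℕ+) := {A : Set ℕ+ | famShift A G ∈ F}

/-- A family is idempotent if `𝔉 ⊆ 𝔉 + 𝔉`. -/
def IdempotentFamily (F : Set (Set ℕ+)) : Prop := F ⊆ famSum F F

/-- A proper family: nonempty and not containing the empty set. -/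
def ProperFamily (F : Set (Set ℕ+)) : Prop := F.Nonempty ∧ ∅ ∉ F

/-- An ultrafilter on `ℕ`, viewed combinatorially: a proper filter of subsets such that for
every set either it or its complement is a member. -/
def IsUltra (p : Set (Set ℕ+)) : Prop :=
  IsFilterFamily p ∧ p.Nonempty ∧ ∅ ∉ p ∧ ∀ S : Set ℕ+, S ∈ p ∨ Sᶜ ∈ p

/-- A left ideal of the semigroup `(βℕ, +)`: a nonempty set `L` of ultrafilters with
`𝔮 + 𝔭 ∈ L` for every ultrafilter `𝔮` and every `𝔭 ∈ L`. -/
def IsLeftIdeal (L : Set (Set (Set ℕ+))) : Prop :=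
  (∀ p ∈ L, IsUltra p) ∧ L.Nonempty ∧
    ∀ q : Set (Set ℕ+), IsUltra q → ∀ p ∈ L, famSum q p ∈ L

/-- A minimal left ideal: a left ideal minimal under inclusion. -/
def IsMinimalLeftIdeal (L : Set (Set (Set ℕ+))) : Prop :=
  IsLeftIdeal L ∧ ∀ L' : Set (Set (Set ℕ+)), IsLeftIdeal L' → L' ⊆ L → L' = L

/-- A set is central if it belongs to an idempotent ultrafilter lying in a minimal left
ideal of `βℕ`. -/
def Central (A : Set ℕ+) : Prop :=
  ∃ p : Set (Set ℕ+), IsUltra p ∧ famSum p p = p ∧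
    (∃ L : Set (Set (Set ℕ+)), IsMinimalLeftIdeal L ∧ p ∈ L) ∧ A ∈ p

/-!
Identify the ultrafilters of the statement with Mathlib's `Ultrafilter ℕ+` via
`U ↦ (U : Filter ℕ+).sets`; this turns `famSum` into the convolution `U + V`. A minimal left
ideal `L` equals `βℕ + V` for each of its members `V`, so it is compact. Inside it, the
ultrafilters containing `𝓕` form a closed set. It is nonempty: a syndetic set has a translate in
every ultrafilter, hence lies in some member of `L`, and `𝓕` is closed under intersections. It is
closed under `+` because `𝓕 ⊆ 𝓕 + 𝓕`. The Ellis–Numakura lemma then gives an idempotent in it.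
-/

attribute [local instance] Ultrafilter.add Ultrafilter.addSemigroup

open Filter

theorem isClosed_setOf_subset_sets {α : Type*} (𝓕 : Set (Set α)) :
    IsClosed {U : Ultrafilter α | 𝓕 ⊆ (U : Filter α).sets} := by
  simp only [Set.subset_def, ofPred_forall]
  exact isClosed_biInter fun A _ => ultrafilter_isClosed_basic A

theorem exists_mem_of_isClosed_of_inter_mem {α : Type*} {K : Set (Ultrafilter α)}
    (hK : IsClosed K) (hK₀ : K.Nonempty) {𝓕 : Set (Set α)}
    (h𝓕 : ∀ ⦃A B⦄, A ∈ 𝓕 → B ∈ 𝓕 → A ∩ B ∈ 𝓕) (hmem : ∀ A ∈ 𝓕, ∃ U ∈ K, A ∈ U) :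
    ∃ U ∈ K, 𝓕 ⊆ (U : Filter α).sets := by
  rcases 𝓕.eq_empty_or_nonempty with rfl | ⟨A₀, hA₀⟩
  · obtain ⟨U, hU⟩ := hK₀
    exact ⟨U, hU, empty_subset _⟩
  have : Nonempty 𝓕 := ⟨⟨A₀, hA₀⟩⟩
  let Z : 𝓕 → Set (Ultrafilter α) := fun A => K ∩ {U | A.1 ∈ U}
  have hZ_closed : ∀ A, IsClosed (Z A) := fun A => hK.inter (ultrafilter_isClosed_basic A.1)
  have hZ_directed : Directed (· ⊇ ·) Z := fun A B =>
    ⟨⟨A.1 ∩ B.1, h𝓕 A.2 B.2⟩,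
      fun _ hU => ⟨hU.1, mem_of_superset hU.2 inter_subset_left⟩,
      fun _ hU => ⟨hU.1, mem_of_superset hU.2 inter_subset_right⟩⟩
  obtain ⟨U, hU⟩ := IsCompact.nonempty_iInter_of_directed_nonempty_isCompact_isClosed Z
    hZ_directed (fun A => hmem A.1 A.2) (fun A => (hZ_closed A).isCompact) hZ_closed
  rw [mem_iInter] at hU
  exact ⟨U, (hU ⟨A₀, hA₀⟩).1, fun A hA => (hU ⟨A, hA⟩).2⟩

theorem mem_add_iff_famShift_mem {U V : Ultrafilter ℕ+} {A : Set ℕ+} :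
    A ∈ U + V ↔ famShift A (V : Filter ℕ+).sets ∈ U := by
  have : famShift A (V : Filter ℕ+).sets = {m | ∀ᶠ n in (V : Filter ℕ+), m + n ∈ A} := by
    ext m
    simp only [famShift, shiftN, add_comm]
    rfl
  rw [this]
  rfl

theorem mem_pure_add_iff {k : ℕ+} {V : Ultrafilter ℕ+} {A : Set ℕ+} :
    A ∈ pure k + V ↔ shiftN A k ∈ V :=
  mem_add_iff_famShift_mem

theorem famSum_sets (U V : Ultrafilter ℕ+) :
    famSum (U : Filter ℕ+).sets (V : Filter ℕ+).sets = ((U + V : Ultrafilter ℕ+) : Filter ℕ+).sets :=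
  Set.ext fun _ => mem_add_iff_famShift_mem.symm

theorem isUltra_sets (U : Ultrafilter ℕ+) : IsUltra (U : Filter ℕ+).sets :=
  ⟨⟨fun _ _ => mem_of_superset, fun _ _ => inter_mem⟩, ⟨univ, univ_mem⟩, U.empty_notMem,
    U.mem_or_compl_mem⟩

theorem IsUltra.exists_sets_eq {p : Set (Set ℕ+)} (hp : IsUltra p) :
    ∃ U : Ultrafilter ℕ+, (U : Filter ℕ+).sets = p := by
  obtain ⟨⟨hup, hinter⟩, ⟨A, hA⟩, hempty, hcompl⟩ := hp
  let f : Filter ℕ+ := ⟨p, hup hA (subset_univ A), fun h h' => hup h h', fun h h' => hinter h h'⟩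
  refine ⟨.ofComplNotMemIff f fun s => ⟨(hcompl s).resolve_right, fun hs hsc => ?_⟩, rfl⟩
  exact hempty (by simpa using hinter hs hsc)

theorem Ultrafilter.sets_injective {α : Type*} :
    Function.Injective fun U : Ultrafilter α => (U : Filter α).sets :=
  fun _ _ h => Ultrafilter.coe_injective (Filter.filter_eq h)

theorem Syndetic.mem_or_exists_shiftN_mem {A : Set ℕ+} (hA : Syndetic A) (U : Ultrafilter ℕ+) :
    A ∈ U ∨ ∃ k, shiftN A k ∈ U := by
  obtain ⟨N, hN⟩ := hA
  have hcover : (A ∪ ⋃ k ∈ {k | k ≤ N}, shiftN A k) ∈ U := by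
    rw [hN]
    exact univ_mem
  refine (Ultrafilter.union_mem_iff.mp hcover).imp id fun h => ?_
  obtain ⟨k, -, hk⟩ := (Ultrafilter.finite_biUnion_mem_iff (finite_Iic N)).mp h
  exact ⟨k, hk⟩

theorem IdempotentFamily.subset_sets_add {𝓕 : Set (Set ℕ+)} (h𝓕 : IdempotentFamily 𝓕)
    {U V : Ultrafilter ℕ+} (hU : 𝓕 ⊆ (U : Filter ℕ+).sets) (hV : 𝓕 ⊆ (V : Filter ℕ+).sets) :
    𝓕 ⊆ ((U + V : Ultrafilter ℕ+) : Filter ℕ+).sets := fun _ hA =>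
  mem_add_iff_famShift_mem.mpr (mem_of_superset (hU (h𝓕 hA)) fun _ hn => hV hn)

section LeftIdeal

variable {L : Set (Set (Set ℕ+))}

theorem IsLeftIdeal.exists_sets_mem (hL : IsLeftIdeal L) :
    ∃ V : Ultrafilter ℕ+, (V : Filter ℕ+).sets ∈ L := by
  obtain ⟨p, hp⟩ := hL.2.1
  obtain ⟨V, rfl⟩ := (hL.1 p hp).exists_sets_eq
  exact ⟨V, hp⟩

theorem IsLeftIdeal.add_mem (hL : IsLeftIdeal L) (U : Ultrafilter ℕ+) {V : Ultrafilter ℕ+}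
    (hV : (V : Filter ℕ+).sets ∈ L) : ((U + V : Ultrafilter ℕ+) : Filter ℕ+).sets ∈ L := by
  simpa only [famSum_sets] using hL.2.2 _ (isUltra_sets U) _ hV

theorem IsLeftIdeal.exists_mem_of_syndetic (hL : IsLeftIdeal L) {A : Set ℕ+} (hA : Syndetic A) :
    ∃ U : Ultrafilter ℕ+, (U : Filter ℕ+).sets ∈ L ∧ A ∈ U := by
  obtain ⟨V, hV⟩ := hL.exists_sets_mem
  rcases hA.mem_or_exists_shiftN_mem V with h | ⟨k, hk⟩
  · exact ⟨V, hV, h⟩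
  · exact ⟨pure k + V, hL.add_mem _ hV, mem_pure_add_iff.mpr hk⟩

theorem isLeftIdeal_range_add (V : Ultrafilter ℕ+) :
    IsLeftIdeal (range fun W : Ultrafilter ℕ+ => ((W + V : Ultrafilter ℕ+) : Filter ℕ+).sets) := by
  refine ⟨?_, ⟨_, V, rfl⟩, ?_⟩
  · rintro _ ⟨W, rfl⟩
    exact isUltra_sets _
  · rintro q hq _ ⟨W, rfl⟩
    obtain ⟨Q, rfl⟩ := hq.exists_sets_eq
    exact ⟨Q + W, by rw [famSum_sets, ← add_assoc]⟩

theorem IsMinimalLeftIdeal.setOf_sets_mem_eq_range (hL : IsMinimalLeftIdeal L)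
    {V : Ultrafilter ℕ+} (hV : (V : Filter ℕ+).sets ∈ L) :
    {U : Ultrafilter ℕ+ | (U : Filter ℕ+).sets ∈ L} = range (· + V) := by
  have hL_eq := hL.2 _ (isLeftIdeal_range_add V) (range_subset_iff.mpr fun W => hL.1.add_mem W hV)
  ext U
  rw [mem_ofPred_eq, ← hL_eq]
  exact exists_congr fun W => Ultrafilter.sets_injective.eq_iff

theorem IsMinimalLeftIdeal.isClosed_setOf_sets_mem (hL : IsMinimalLeftIdeal L) :
    IsClosed {U : Ultrafilter ℕ+ | (U : Filter ℕ+).sets ∈ L} := by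
  obtain ⟨V, hV⟩ := hL.1.exists_sets_mem
  rw [hL.setOf_sets_mem_eq_range hV]
  exact (isCompact_range (Ultrafilter.continuous_add_left V)).isClosed

end LeftIdeal

/-- For every syndetic, idempotent filter `𝔉` and every minimal left ideal `L` of
`(βℕ, +)`, there is an idempotent ultrafilter `𝔭 ∈ L` containing `𝔉`. -/
theorem syndetic_idempotent_filter_contained_in_minimal_idempotent
    (𝓕 : Set (Set ℕ+)) (hFil : IsFilterFamily 𝓕) (hSyn : SyndeticFamily 𝓕)
    (hIdem : IdempotentFamily 𝓕)
    (L : Set (Set (Set ℕ+))) (hL : IsMinimalLeftIdeal L) :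
    ∃ p ∈ L, IsUltra p ∧ famSum p p = p ∧ 𝓕 ⊆ p := by
  let S : Set (Ultrafilter ℕ+) :=
    {U | (U : Filter ℕ+).sets ∈ L} ∩ {U | 𝓕 ⊆ (U : Filter ℕ+).sets}
  have hS_closed : IsClosed S :=
    hL.isClosed_setOf_sets_mem.inter (isClosed_setOf_subset_sets 𝓕)
  have hS_nonempty : S.Nonempty :=
    exists_mem_of_isClosed_of_inter_mem hL.isClosed_setOf_sets_mem hL.1.exists_sets_mem hFil.2
      fun A hA => hL.1.exists_mem_of_syndetic (hSyn A hA)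
  have hS_add : ∀ U ∈ S, ∀ V ∈ S, U + V ∈ S := fun U hU _ hV =>
    ⟨hL.1.add_mem U hV.1, hIdem.subset_sets_add hU.2 hV.2⟩
  obtain ⟨p, ⟨hpL, hp𝓕⟩, hpp⟩ := exists_idempotent_in_compact_add_subsemigroup
    Ultrafilter.continuous_add_left S hS_nonempty hS_closed.isCompact hS_add
  exact ⟨_, hpL, isUltra_sets p, by rw [famSum_sets, hpp], hp𝓕⟩
end

section
/- Let A ⊆ ℕ belong to a syndetic, idempotent filter. Then for every minimal left ideal L of the semigroup (βℕ, +) there exists an idempotent ultrafilter 𝔭 ∈ L with A ∈ 𝔭. In particular, for every thick set H ⊆ ℕ, the set A ∩ H is central. -/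
/-!
A filter `𝔉` corresponds to the closed set `{𝔭 | 𝔉 ⊆ 𝔭}` of `βℕ`. If `S` is syndetic, then for
every ultrafilter `𝔮` either `S ∈ 𝔮` or `S − k ∈ 𝔮` for some `k ≤ N`, and then `S ∈ k + 𝔮`; so
each member of `𝔉` belongs to an element of every left ideal. A minimal left ideal `L = βℕ + 𝔮`
is closed, hence compact, so some `𝔭 ∈ L` contains all of `𝔉`. Idempotence of `𝔉` makes
`{𝔭 | 𝔉 ⊆ 𝔭}` a subsemigroup, so its intersection with `L` is a nonempty compact subsemigroup
and contains an idempotent (Ellis–Numakura). For a thick `H` some ultrafilter `𝔮` contains every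
`H − n`, so `H` belongs to every element of `βℕ + 𝔮`, and a minimal left ideal inside
`βℕ + 𝔮` yields an idempotent containing `A ∩ H`.
-/

open Set

open Filter

section LeftIdeal

variable {M : Type*} [AddSemigroup M]

def IsAddLeftIdeal (J : Set M) : Prop :=
  J.Nonempty ∧ ∀ x, ∀ y ∈ J, x + y ∈ J

def IsMinimalAddLeftIdeal (J : Set M) : Prop :=
  IsAddLeftIdeal J ∧ ∀ J', IsAddLeftIdeal J' → J' ⊆ J → J' = J

lemma isAddLeftIdeal_range_add_right (y : M) : IsAddLeftIdeal (range (· + y)) :=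
  ⟨⟨y + y, y, rfl⟩, by rintro x _ ⟨z, rfl⟩; exact ⟨x + z, add_assoc x z y⟩⟩

lemma IsAddLeftIdeal.range_add_right_subset {J : Set M} (hJ : IsAddLeftIdeal J) {y : M}
    (hy : y ∈ J) : range (· + y) ⊆ J := by
  rintro _ ⟨x, rfl⟩
  exact hJ.2 x y hy

lemma IsMinimalAddLeftIdeal.eq_range_add_right {J : Set M} (hJ : IsMinimalAddLeftIdeal J)
    {y : M} (hy : y ∈ J) : J = range (· + y) :=
  (hJ.2 _ (isAddLeftIdeal_range_add_right y) (hJ.1.range_add_right_subset hy)).symm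

variable [TopologicalSpace M] [CompactSpace M]

lemma IsChain.isAddLeftIdeal_sInter {c : Set (Set M)} (hc : IsChain (· ⊆ ·) c)
    (hne : c.Nonempty) (hideal : ∀ K ∈ c, IsAddLeftIdeal K) (hclosed : ∀ K ∈ c, IsClosed K) :
    IsAddLeftIdeal (⋂₀ c) := by
  have : Nonempty c := hne.to_subtype
  have hdir : DirectedOn (· ⊇ ·) c := fun a ha b hb =>
    (hc.total ha hb).elim (fun h => ⟨a, ha, subset_rfl, h⟩) fun h => ⟨b, hb, h, subset_rfl⟩
  refine ⟨IsCompact.nonempty_sInter_of_directed_nonempty_isCompact_isClosed hdir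
    (fun K hK => (hideal K hK).1) (fun K hK => (hclosed K hK).isCompact) hclosed,
    fun x y hy => mem_sInter.2 fun K hK => (hideal K hK).2 x y (hy K hK)⟩

variable [T2Space M]

lemma isClosed_range_add_right (hcont : ∀ y : M, Continuous (· + y)) (y : M) :
    IsClosed (range (· + y)) :=
  (isCompact_range (hcont y)).isClosed

lemma IsMinimalAddLeftIdeal.isClosed (hcont : ∀ y : M, Continuous (· + y)) {J : Set M}
    (hJ : IsMinimalAddLeftIdeal J) : IsClosed J := by
  obtain ⟨y, hy⟩ := hJ.1.1
  rw [hJ.eq_range_add_right hy]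
  exact isClosed_range_add_right hcont y

/-- A minimal closed left ideal inside `J` (Zorn) is minimal among all left ideals, because every
left ideal contains a closed one, `M + y`. -/
lemma IsAddLeftIdeal.exists_isMinimalAddLeftIdeal_subset (hcont : ∀ y : M, Continuous (· + y))
    {J : Set M} (hJ : IsAddLeftIdeal J) : ∃ K ⊆ J, IsMinimalAddLeftIdeal K := by
  obtain ⟨y, hy⟩ := hJ.1
  let S : Set (Set M) := {K | IsAddLeftIdeal K ∧ IsClosed K ∧ K ⊆ J}
  have hS : range (· + y) ∈ S :=
    ⟨isAddLeftIdeal_range_add_right y, isClosed_range_add_right hcont y,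
      hJ.range_add_right_subset hy⟩
  have hchain : ∀ c ⊆ S, IsChain (· ⊆ ·) c → c.Nonempty → ∃ lb ∈ S, ∀ K ∈ c, lb ⊆ K :=
    fun c hcS hc hne => ⟨⋂₀ c,
      ⟨hc.isAddLeftIdeal_sInter hne (fun K hK => (hcS hK).1) (fun K hK => (hcS hK).2.1),
        isClosed_sInter fun K hK => (hcS hK).2.1,
        fun _ hx => let ⟨K, hK⟩ := hne; (hcS hK).2.2 (hx K hK)⟩,
      fun _ => sInter_subset_of_mem⟩
  obtain ⟨K, -, hKmin⟩ := zorn_superset_nonempty S hchain _ hS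
  obtain ⟨hK, -, hKJ⟩ := hKmin.prop
  refine ⟨K, hKJ, hK, fun K' hK' hK'K => ?_⟩
  obtain ⟨z, hz⟩ := hK'.1
  have hzK : range (· + z) ⊆ K := hK.range_add_right_subset (hK'K hz)
  exact hK'K.antisymm ((hKmin.le_of_le ⟨isAddLeftIdeal_range_add_right z,
    isClosed_range_add_right hcont z, hzK.trans hKJ⟩ hzK).trans
      (hK'.range_add_right_subset hz))

end LeftIdeal

attribute [local instance] Ultrafilter.add Ultrafilter.addSemigroup

lemma Ultrafilter.mem_add_iff {M : Type*} [Add M] {U V : Ultrafilter M} {s : Set M} :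
    s ∈ U + V ↔ ∀ᶠ m in U, ∀ᶠ m' in V, m + m' ∈ s :=
  Iff.rfl

lemma isClosed_setOf_coe_le {α : Type*} (f : Filter α) :
    IsClosed {U : Ultrafilter α | ↑U ≤ f} := by
  have : {U : Ultrafilter α | ↑U ≤ f} = ⋂ s ∈ f, {U | s ∈ U} := by
    ext U
    simp [Filter.le_def]
  rw [this]
  exact isClosed_biInter fun s _ => ultrafilter_isClosed_basic s

lemma Syndetic.exists_mem_of_isAddLeftIdeal {s : Set ℕ+} (hs : Syndetic s)
    {J : Set (Ultrafilter ℕ+)} (hJ : IsAddLeftIdeal J) : ∃ U ∈ J, s ∈ U := by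
  obtain ⟨V, hV⟩ := hJ.1
  obtain ⟨N, hN⟩ := hs
  have hcover : s ∪ ⋃ k ∈ {k : ℕ+ | k ≤ N}, shiftN s k ∈ V := by
    rw [hN]
    exact univ_mem
  rcases Ultrafilter.union_mem_iff.1 hcover with hsV | hshift
  · exact ⟨V, hV, hsV⟩
  · obtain ⟨k, -, hk⟩ := (Ultrafilter.finite_biUnion_mem_iff (finite_Iic N)).1 hshift
    refine ⟨pure k + V, hJ.2 _ V hV, Ultrafilter.mem_add_iff.2 ?_⟩
    rw [Ultrafilter.coe_pure, eventually_pure]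
    filter_upwards [hk] with m hm
    rwa [add_comm]

lemma exists_le_mem_of_syndeticFamily {f : Filter ℕ+} (hf : SyndeticFamily f.sets)
    {J : Set (Ultrafilter ℕ+)} (hJ : IsAddLeftIdeal J) (hJc : IsClosed J) :
    ∃ U ∈ J, ↑U ≤ f := by
  obtain ⟨U, hUJ, hU⟩ := hJc.isCompact.inter_iInter_nonempty
    (fun s : f.sets => {U : Ultrafilter ℕ+ | (s : Set ℕ+) ∈ U})
    (fun s => ultrafilter_isClosed_basic (s : Set ℕ+)) fun u => by
      obtain ⟨U, hUJ, hU⟩ :=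
        (hf _ ((biInter_finset_mem u).2 fun s _ => s.2)).exists_mem_of_isAddLeftIdeal hJ
      exact ⟨U, hUJ, mem_iInter₂.2 fun s hs =>
        Ultrafilter.mem_coe.1 (mem_of_superset hU (biInter_subset_of_mem hs))⟩
  exact ⟨U, hUJ, fun s hs => mem_iInter.1 hU ⟨s, hs⟩⟩

lemma add_le_of_idempotentFamily {f : Filter ℕ+} (hf : IdempotentFamily f.sets)
    {U V : Ultrafilter ℕ+} (hU : ↑U ≤ f) (hV : ↑V ≤ f) : ↑(U + V) ≤ f := fun s hs => by
  refine Ultrafilter.mem_add_iff.2 (mem_of_superset (hU (hf hs)) fun n hn => ?_)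
  filter_upwards [hV hn] with m hm
  rwa [add_comm]

lemma IsMinimalAddLeftIdeal.exists_idempotent_le {f : Filter ℕ+} (hsyn : SyndeticFamily f.sets)
    (hidem : IdempotentFamily f.sets) {K : Set (Ultrafilter ℕ+)}
    (hK : IsMinimalAddLeftIdeal K) : ∃ U ∈ K, U + U = U ∧ ↑U ≤ f := by
  have hKc := hK.isClosed Ultrafilter.continuous_add_left
  obtain ⟨U, ⟨hUK, hfU⟩, hUU⟩ := exists_idempotent_in_compact_add_subsemigroup
    Ultrafilter.continuous_add_left (K ∩ {U | ↑U ≤ f})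
    (exists_le_mem_of_syndeticFamily hsyn hK.1 hKc)
    (hKc.inter (isClosed_setOf_coe_le f)).isCompact
    fun U hU V hV => ⟨hK.1.2 U V hV.1, add_le_of_idempotentFamily hidem hU.2 hV.2⟩
  exact ⟨U, hUK, hUU, hfU⟩

def Ultrafilter.toFamily {α : Type*} (U : Ultrafilter α) : Set (Set α) := U.sets

lemma Ultrafilter.toFamily_injective {α : Type*} : Function.Injective (toFamily (α := α)) :=
  fun _ _ h => Ultrafilter.coe_injective (Filter.filter_eq h)

lemma isUltra_toFamily (U : Ultrafilter ℕ+) : IsUltra U.toFamily :=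
  ⟨⟨fun _ _ hs hst => mem_of_superset hs hst, fun _ _ => inter_mem⟩,
    ⟨univ, univ_mem⟩, U.empty_notMem, U.mem_or_compl_mem⟩

lemma IsUltra.exists_toFamily_eq {p : Set (Set ℕ+)} (hp : IsUltra p) :
    ∃ U : Ultrafilter ℕ+, U.toFamily = p := by
  obtain ⟨⟨hup, hinter⟩, ⟨s, hs⟩, hempty, hcompl⟩ := hp
  let f : Filter ℕ+ :=
    ⟨p, hup hs (subset_univ s), fun hs hst => hup hs hst, fun hs ht => hinter hs ht⟩
  refine ⟨Ultrafilter.ofComplNotMemIff f fun t =>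
    ⟨(hcompl t).resolve_right, fun ht htc => hempty ?_⟩, rfl⟩
  simpa using hinter ht htc

lemma famSum_toFamily (U V : Ultrafilter ℕ+) :
    famSum U.toFamily V.toFamily = (U + V).toFamily := by
  ext s
  refine eventually_congr (Eventually.of_forall fun m => eventually_congr
    (Eventually.of_forall fun n => ?_))
  rw [add_comm]

lemma isLeftIdeal_image_toFamily_iff {K : Set (Ultrafilter ℕ+)} :
    IsLeftIdeal (Ultrafilter.toFamily '' K) ↔ IsAddLeftIdeal K := by
  refine ⟨fun ⟨_, hne, hadd⟩ => ⟨image_nonempty.1 hne, fun U V hV => ?_⟩,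
    fun ⟨hne, hadd⟩ => ⟨?_, hne.image _, ?_⟩⟩
  · rw [← Ultrafilter.toFamily_injective.mem_set_image, ← famSum_toFamily]
    exact hadd _ (isUltra_toFamily U) _ (mem_image_of_mem _ hV)
  · rintro _ ⟨U, -, rfl⟩
    exact isUltra_toFamily U
  · rintro q hq _ ⟨V, hV, rfl⟩
    obtain ⟨U, rfl⟩ := hq.exists_toFamily_eq
    rw [famSum_toFamily]
    exact mem_image_of_mem _ (hadd U V hV)

lemma IsLeftIdeal.image_preimage_toFamily {L : Set (Set (Set ℕ+))} (hL : IsLeftIdeal L) :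
    Ultrafilter.toFamily '' (Ultrafilter.toFamily ⁻¹' L) = L :=
  image_preimage_eq_of_subset fun p hp => (hL.1 p hp).exists_toFamily_eq

lemma isMinimalLeftIdeal_image_toFamily_iff {K : Set (Ultrafilter ℕ+)} :
    IsMinimalLeftIdeal (Ultrafilter.toFamily '' K) ↔ IsMinimalAddLeftIdeal K := by
  have hinj := Ultrafilter.toFamily_injective (α := ℕ+)
  refine ⟨fun ⟨hL, hmin⟩ => ⟨isLeftIdeal_image_toFamily_iff.1 hL, fun K' hK' hK'K => ?_⟩,
    fun ⟨hK, hmin⟩ => ⟨isLeftIdeal_image_toFamily_iff.2 hK, fun L' hL' hL'K => ?_⟩⟩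
  · exact hinj.image_injective
      (hmin _ (isLeftIdeal_image_toFamily_iff.2 hK') (image_mono hK'K))
  · obtain ⟨K', rfl⟩ : ∃ K', Ultrafilter.toFamily '' K' = L' :=
      ⟨_, hL'.image_preimage_toFamily⟩
    exact congrArg _ (hmin _ (isLeftIdeal_image_toFamily_iff.1 hL')
      ((image_subset_image_iff hinj).1 hL'K))

def IsFilterFamily.toFilter {𝓕 : Set (Set ℕ+)} (hF : IsFilterFamily 𝓕) (huniv : univ ∈ 𝓕) :
    Filter ℕ+ where
  sets := 𝓕
  univ_sets := huniv
  sets_of_superset hs hst := hF.1 hs hst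
  inter_sets hs ht := hF.2 hs ht

lemma IsMinimalLeftIdeal.exists_idempotent_superset {𝓕 : Set (Set ℕ+)} (hF : IsFilterFamily 𝓕)
    (hsyn : SyndeticFamily 𝓕) (hidem : IdempotentFamily 𝓕) (hne : 𝓕.Nonempty)
    {L : Set (Set (Set ℕ+))} (hL : IsMinimalLeftIdeal L) :
    ∃ p ∈ L, IsUltra p ∧ famSum p p = p ∧ 𝓕 ⊆ p := by
  obtain ⟨s, hs⟩ := hne
  rw [← hL.1.image_preimage_toFamily, isMinimalLeftIdeal_image_toFamily_iff] at hL
  obtain ⟨U, hUL, hUU, hFU⟩ :=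
    hL.exists_idempotent_le (f := hF.toFilter (hF.1 hs (subset_univ s))) hsyn hidem
  exact ⟨U.toFamily, hUL, isUltra_toFamily U, by rw [famSum_toFamily, hUU], fun t ht => hFU ht⟩

lemma Thick.exists_ultrafilter_forall_mem_add {H : Set ℕ+} (hH : Thick H) :
    ∃ P : Ultrafilter ℕ+, ∀ Q : Ultrafilter ℕ+, H ∈ Q + P := by
  classical
  obtain ⟨P, hP⟩ := Ultrafilter.exists_ultrafilter_of_finite_inter_nonempty (range (shiftN H))
    fun T hT => by
      obtain ⟨F, -, rfl⟩ := Finset.subset_set_image_iff.1 (image_univ (f := shiftN H) ▸ hT)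
      obtain ⟨n, hn⟩ := hH F
      refine ⟨n, ?_⟩
      simp only [Finset.coe_image, sInter_image, mem_iInter₂]
      exact fun k hk => show n + k ∈ H from add_comm k n ▸ hn k hk
  refine ⟨P, fun Q => Ultrafilter.mem_add_iff.2 (Eventually.of_forall fun m => ?_)⟩
  filter_upwards [hP (mem_range_self m)] with n hn
  rwa [add_comm]

/-- If `A` belongs to a syndetic, idempotent filter, then every minimal left ideal of
`(βℕ, +)` contains an idempotent ultrafilter to which `A` belongs; in particular, for every
thick set `H`, the set `A ∩ H` is central. -/
theorem member_syndetic_idempotent_filter_strongly_central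
    (A : Set ℕ+)
    (h : ∃ 𝓕 : Set (Set ℕ+),
      IsFilterFamily 𝓕 ∧ SyndeticFamily 𝓕 ∧ IdempotentFamily 𝓕 ∧ A ∈ 𝓕) :
    (∀ L : Set (Set (Set ℕ+)), IsMinimalLeftIdeal L →
      ∃ p ∈ L, IsUltra p ∧ famSum p p = p ∧ A ∈ p) ∧
    (∀ H : Set ℕ+, Thick H → Central (A ∩ H)) := by
  obtain ⟨𝓕, hF, hsyn, hidem, hA⟩ := h
  have key := fun L (hL : IsMinimalLeftIdeal L) =>
    hL.exists_idempotent_superset hF hsyn hidem ⟨A, hA⟩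
  refine ⟨fun L hL => ?_, fun H hH => ?_⟩
  · obtain ⟨p, hpL, hp, hpp, h𝓕p⟩ := key L hL
    exact ⟨p, hpL, hp, hpp, h𝓕p hA⟩
  obtain ⟨P, hP⟩ := hH.exists_ultrafilter_forall_mem_add
  obtain ⟨K, hKP, hK⟩ := (isAddLeftIdeal_range_add_right P).exists_isMinimalAddLeftIdeal_subset
    Ultrafilter.continuous_add_left
  have hL := isMinimalLeftIdeal_image_toFamily_iff.2 hK
  obtain ⟨_, ⟨U, hUK, rfl⟩, hU, hUU, h𝓕U⟩ := key _ hL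
  obtain ⟨Q, rfl⟩ := hKP hUK
  exact ⟨_, hU, hUU, ⟨_, hL, mem_image_of_mem _ hUK⟩, inter_mem (h𝓕U hA) (hP Q)⟩
end

section
/- A set A ⊆ ℕ is an IP set if and only if A is a member of a proper, idempotent filter on ℕ. -/
open Set

/-- An IP set: a set containing all finite sums (over nonempty finite index sets) of some
sequence of positive integers. -/
def IsIP (A : Set ℕ+) : Prop :=
  ∃ x : ℕ → ℕ+, ∀ F : Finset ℕ, F.Nonempty →
    ∃ a ∈ A, (a : ℕ) = ∑ i ∈ F, ((x i : ℕ))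

/-!
If `x` generates the IP set `A`, then `A` belongs to the filter generated by the tail sets
`FS(x_k, x_{k+1}, …)`. This filter is idempotent because a finite sum followed by a finite sum of
strictly later terms is again a finite sum.

Conversely (Galvin), if `B` lies in a proper idempotent filter `𝓕`, then so does `B ∩ (B − 𝓕)`,
so some `n ∈ B` has `B ∩ (B − n) ∈ 𝓕`. Iterating from `B₀ = A` with `B_{k+1} = B_k ∩ (B_k − x_k)`
gives a sequence `x` all of whose finite sums over indices `≥ k` lie in `B_k`.
-/

open Filter

theorem Filter.isFilterFamily_sets (f : Filter ℕ+) : IsFilterFamily f.sets :=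
  ⟨fun _ _ hA hAB => mem_of_superset hA hAB, fun _ _ => inter_mem⟩

theorem Filter.properFamily_sets (f : Filter ℕ+) [f.NeBot] : ProperFamily f.sets :=
  ⟨⟨univ, univ_mem⟩, f.empty_notMem⟩

def finSumsFrom (x : ℕ → ℕ+) (k : ℕ) : Set ℕ+ :=
  {a | ∃ s : Finset ℕ, s.Nonempty ∧ (∀ i ∈ s, k ≤ i) ∧ (a : ℕ) = ∑ i ∈ s, (x i : ℕ)}

section FinSumsFrom

variable (x : ℕ → ℕ+)

theorem antitone_finSumsFrom : Antitone (finSumsFrom x) :=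
  fun _ _ hkl _ ⟨s, hs, hsl, hsum⟩ => ⟨s, hs, fun i hi => hkl.trans (hsl i hi), hsum⟩

theorem mem_finSumsFrom_self (k : ℕ) : x k ∈ finSumsFrom x k :=
  ⟨{k}, Finset.singleton_nonempty k, by simp, by simp⟩

theorem exists_add_mem_finSumsFrom {a : ℕ+} {k : ℕ} (ha : a ∈ finSumsFrom x k) :
    ∃ l, ∀ b ∈ finSumsFrom x l, b + a ∈ finSumsFrom x k := by
  obtain ⟨s, hs, hsk, hsum⟩ := ha
  refine ⟨s.max' hs + 1, fun b ⟨t, ht, htl, htsum⟩ => ?_⟩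
  have hdisj : Disjoint t s := Finset.disjoint_left.2 fun i hit his => by
    have := s.le_max' i his
    have := htl i hit
    omega
  refine ⟨t ∪ s, ht.mono Finset.subset_union_left, fun i hi => ?_, ?_⟩
  · rcases Finset.mem_union.1 hi with hit | his
    · have := hsk _ (s.max'_mem hs)
      have := htl i hit
      omega
    · exact hsk i his
  · rw [PNat.add_coe, htsum, hsum, Finset.sum_union hdisj]

theorem finSumsFrom_zero_subset {A : Set ℕ+}
    (hx : ∀ s : Finset ℕ, s.Nonempty → ∃ a ∈ A, (a : ℕ) = ∑ i ∈ s, (x i : ℕ)) :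
    finSumsFrom x 0 ⊆ A := by
  rintro a ⟨s, hs, -, hsum⟩
  obtain ⟨a', ha', ha'sum⟩ := hx s hs
  rwa [PNat.coe_injective (hsum.trans ha'sum.symm)]

def tailSumsFilter : Filter ℕ+ := ⨅ k, 𝓟 (finSumsFrom x k)

theorem hasAntitoneBasis_tailSumsFilter :
    (tailSumsFilter x).HasAntitoneBasis (finSumsFrom x) :=
  .iInf_principal (antitone_finSumsFrom x)

instance : (tailSumsFilter x).NeBot :=
  (hasAntitoneBasis_tailSumsFilter x).toHasBasis.neBot_iff.2
    fun {k} _ => ⟨x k, mem_finSumsFrom_self x k⟩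

theorem idempotentFamily_tailSumsFilter : IdempotentFamily (tailSumsFilter x).sets := by
  intro B hB
  obtain ⟨k, hk⟩ := (hasAntitoneBasis_tailSumsFilter x).mem_iff.1 hB
  refine (hasAntitoneBasis_tailSumsFilter x).mem_iff.2 ⟨k, fun a ha => ?_⟩
  obtain ⟨l, hl⟩ := exists_add_mem_finSumsFrom x ha
  exact (hasAntitoneBasis_tailSumsFilter x).mem_iff.2 ⟨l, fun b hb => hk (hl b hb)⟩

end FinSumsFrom

theorem exists_mem_inter_shiftN_mem {𝓕 : Set (Set ℕ+)}
    (hinter : ∀ ⦃A B : Set ℕ+⦄, A ∈ 𝓕 → B ∈ 𝓕 → A ∩ B ∈ 𝓕) (hempty : ∅ ∉ 𝓕)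
    (hidem : IdempotentFamily 𝓕) {B : Set ℕ+} (hB : B ∈ 𝓕) :
    ∃ n ∈ B, B ∩ shiftN B n ∈ 𝓕 := by
  have hmem : B ∩ famShift B 𝓕 ∈ 𝓕 := hinter hB (hidem hB)
  obtain ⟨n, hnB, hn⟩ := nonempty_iff_ne_empty.2 fun h => hempty (h ▸ hmem)
  exact ⟨n, hnB, hinter hB hn⟩

theorem isIP_of_forall_exists_mem_inter_shiftN {P : Set ℕ+ → Prop} {A : Set ℕ+} (hA : P A)
    (hP : ∀ B, P B → ∃ n ∈ B, P (B ∩ shiftN B n)) : IsIP A := by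
  choose! pt hpt_mem hpt using hP
  set B : ℕ → Set ℕ+ := fun k => (fun C => C ∩ shiftN C (pt C))^[k] A
  have hB_succ (k : ℕ) : B (k + 1) = B k ∩ shiftN (B k) (pt (B k)) :=
    Function.iterate_succ_apply' _ k A
  have hPB (k : ℕ) : P (B k) := by
    induction k with
    | zero => exact hA
    | succ k ih => exact hB_succ k ▸ hpt _ ih
  have hB_anti : Antitone B :=
    antitone_nat_of_succ_le fun k => (hB_succ k).trans_subset inter_subset_left
  suffices key : ∀ s : Finset ℕ, s.Nonempty → ∀ k, (∀ i ∈ s, k ≤ i) →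
      ∃ a ∈ B k, (a : ℕ) = ∑ i ∈ s, (pt (B i) : ℕ) from
    ⟨fun k => pt (B k), fun s hs => key s hs 0 fun i _ => i.zero_le⟩
  intro s
  induction s using Finset.induction_on_min with
  | empty => simp
  | insert m s hm ih =>
    intro _ k hk
    have hkm : k ≤ m := hk m (Finset.mem_insert_self m s)
    rw [Finset.sum_insert fun h => (hm m h).false]
    rcases s.eq_empty_or_nonempty with rfl | hs
    · exact ⟨pt (B m), hB_anti hkm (hpt_mem _ (hPB m)), by simp⟩
    · obtain ⟨b, hb, hbsum⟩ := ih hs (m + 1) hm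
      rw [hB_succ] at hb
      exact ⟨b + pt (B m), hB_anti hkm hb.2, by rw [PNat.add_coe, hbsum, add_comm]⟩

/-- A set `A ⊆ ℕ` is an IP set if and only if it is a member of a proper, idempotent
filter on `ℕ`. -/
theorem isIP_iff_mem_proper_idempotent_filter (A : Set ℕ+) :
    IsIP A ↔
      ∃ 𝓕 : Set (Set ℕ+),
        IsFilterFamily 𝓕 ∧ ProperFamily 𝓕 ∧ IdempotentFamily 𝓕 ∧ A ∈ 𝓕 := by
  constructor
  · rintro ⟨x, hx⟩
    refine ⟨(tailSumsFilter x).sets, (tailSumsFilter x).isFilterFamily_sets,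
      (tailSumsFilter x).properFamily_sets, idempotentFamily_tailSumsFilter x, ?_⟩
    exact (hasAntitoneBasis_tailSumsFilter x).mem_iff.2 ⟨0, finSumsFrom_zero_subset x hx⟩
  · rintro ⟨𝓕, hFil, hProp, hIdem, hA⟩
    exact isIP_of_forall_exists_mem_inter_shiftN hA fun B hB =>
      exists_mem_inter_shiftN_mem hFil.2 hProp.2 hIdem hB
end

section
/- The family 𝒫𝒮* of thickly syndetic sets (the dual of the family of piecewise syndetic sets) is a syndetic, translation-invariant filter, and every syndetic, translation-invariant filter on ℕ is contained in 𝒫𝒮*. -/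
open Set

/-- The dual family `𝒫𝒮*` of the family of piecewise syndetic sets: the thickly syndetic
sets. -/
def PSstar : Set (Set ℕ+) :=
  {A : Set ℕ+ | ∀ B : Set ℕ+, PiecewiseSyndetic B → (A ∩ B).Nonempty}

/-- A family is translation invariant if it is closed under the shifts `A ↦ A − n`. -/
def TranslationInvariant (F : Set (Set ℕ+)) : Prop :=
  ∀ A ∈ F, ∀ n : ℕ+, shiftN A n ∈ F

/-! `𝒫𝒮*` is the family of sets whose complement is not piecewise syndetic, and piecewise
syndeticity is partition regular, so `𝒫𝒮*` is a filter. Its members are syndetic because a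
non-syndetic set has a thick complement, and it is translation invariant because a shift of a
piecewise syndetic set is piecewise syndetic.

Conversely, let `𝓕` be a syndetic, translation-invariant filter and `A ∈ 𝓕`. If `Aᶜ` were
piecewise syndetic, `Aᶜ ∪ (Aᶜ − 1) ∪ ⋯ ∪ (Aᶜ − N)` would be thick for some `N`. Its complement
`A ∩ (A − 1) ∩ ⋯ ∩ (A − N)` lies in `𝓕`, hence is syndetic, and a syndetic set meets every
thick set. -/

def unionShifts (A : Set ℕ+) (N : ℕ+) : Set ℕ+ := A ∪ ⋃ k ∈ {k : ℕ+ | k ≤ N}, shiftN A k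

section unionShifts

variable {A B : Set ℕ+} {N : ℕ+} {x : ℕ+}

lemma mem_unionShifts : x ∈ unionShifts A N ↔ x ∈ A ∨ ∃ k ≤ N, x + k ∈ A := by
  simp [unionShifts, shiftN]

lemma unionShifts_mono (h : A ⊆ B) (N : ℕ+) : unionShifts A N ⊆ unionShifts B N := by
  intro x
  simp only [mem_unionShifts]
  exact Or.imp (@h x) fun ⟨k, hk, hxk⟩ => ⟨k, hk, h hxk⟩

lemma unionShifts_mono_right {M : ℕ+} (h : N ≤ M) : unionShifts A N ⊆ unionShifts A M := by
  intro x
  simp only [mem_unionShifts]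
  exact Or.imp_right fun ⟨k, hk, hxk⟩ => ⟨k, hk.trans h, hxk⟩

lemma unionShifts_union (N : ℕ+) :
    unionShifts (A ∪ B) N = unionShifts A N ∪ unionShifts B N := by
  ext x
  simp only [Set.mem_union, mem_unionShifts]
  grind

lemma mem_unionShifts_of_add_mem {g : ℕ+} (h : x + g ∈ unionShifts A N) :
    x ∈ unionShifts A (g + N) := by
  rw [mem_unionShifts] at h ⊢
  rcases h with hA | ⟨k, hk, hA⟩
  · exact Or.inr ⟨g, (PNat.lt_add_right g N).le, hA⟩
  · exact Or.inr ⟨g + k, add_le_add le_rfl hk, by rwa [← add_assoc]⟩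

lemma mem_unionShifts_shiftN {n : ℕ+} :
    x ∈ unionShifts (shiftN A n) N ↔ x + n ∈ unionShifts A N := by
  simp [mem_unionShifts, shiftN, add_right_comm x _ n]

lemma compl_unionShifts :
    (unionShifts A N)ᶜ = Aᶜ ∩ ⋂ k ∈ Finset.Iic N, shiftN Aᶜ k := by
  ext x
  simp [mem_unionShifts, shiftN]

end unionShifts

lemma Thick.mono {A B : Set ℕ+} (h : A ⊆ B) (hA : Thick A) : Thick B := fun F =>
  let ⟨n, hn⟩ := hA F
  ⟨n, fun f hf => h (hn f hf)⟩

lemma PiecewiseSyndetic.mono {A B : Set ℕ+} (h : A ⊆ B) (hA : PiecewiseSyndetic A) :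
    PiecewiseSyndetic B :=
  let ⟨N, hN⟩ := hA
  ⟨N, hN.mono (unionShifts_mono h N)⟩

lemma Thick.piecewiseSyndetic {A : Set ℕ+} (h : Thick A) : PiecewiseSyndetic A :=
  ⟨1, h.mono Set.subset_union_left⟩

lemma thick_compl_of_not_syndetic {A : Set ℕ+} (h : ¬ Syndetic A) : Thick Aᶜ := by
  intro F
  obtain ⟨m, hm⟩ := (Set.ne_univ_iff_exists_notMem _).mp fun hN => h ⟨F.sup id, hN⟩
  rw [← Set.mem_compl_iff, ← unionShifts, compl_unionShifts] at hm
  simp only [Set.mem_inter_iff, Set.mem_iInter, Finset.mem_Iic] at hm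
  exact ⟨m, fun f hf => add_comm m f ▸ hm.2 f (Finset.le_sup (f := id) hf)⟩

lemma Syndetic.inter_nonempty_of_thick {C T : Set ℕ+} (hC : Syndetic C) (hT : Thick T) :
    (C ∩ T).Nonempty := by
  obtain ⟨N, hN : unionShifts C N = Set.univ⟩ := hC
  obtain ⟨n, hn⟩ := hT (Finset.Icc 1 (1 + N))
  have h1n : 1 + n ∈ unionShifts C N := hN ▸ Set.mem_univ _
  rcases mem_unionShifts.mp h1n with hC | ⟨j, hj, hC⟩
  · exact ⟨1 + n, hC, hn 1 (by simp)⟩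
  · refine ⟨1 + j + n, add_right_comm 1 n j ▸ hC, hn _ ?_⟩
    simpa [Finset.mem_Icc] using hj

lemma PiecewiseSyndetic.of_shiftN {A : Set ℕ+} {n : ℕ+} (h : PiecewiseSyndetic (shiftN A n)) :
    PiecewiseSyndetic A :=
  let ⟨N, hN⟩ := h
  ⟨n + N, hN.mono fun _ hx =>
    mem_unionShifts_of_add_mem (mem_unionShifts_shiftN.mp hx)⟩

/-- Partition regularity of piecewise syndeticity. -/
lemma PiecewiseSyndetic.of_union_of_not {A B : Set ℕ+} (h : PiecewiseSyndetic (A ∪ B))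
    (hB : ¬ PiecewiseSyndetic B) : PiecewiseSyndetic A := by
  obtain ⟨N, hN : Thick (unionShifts (A ∪ B) N)⟩ := h
  -- `G` is a finite pattern no translate of which fits into the `N`-window of `B`.
  obtain ⟨G, hG⟩ : ∃ G : Finset ℕ+, ∀ m, ∃ g ∈ G, g + m ∉ unionShifts B N := by
    simpa [Thick, mem_unionShifts, shiftN] using fun h => hB ⟨N, h⟩
  refine ⟨G.sup id + N, fun F => ?_⟩
  obtain ⟨n, hn⟩ := hN ((F ×ˢ G).image fun p => p.1 + p.2)
  refine ⟨n, fun f hf => ?_⟩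
  obtain ⟨g, hg, hgB⟩ := hG (f + n)
  have hAB : f + n + g ∈ unionShifts (A ∪ B) N := by
    rw [add_right_comm]
    exact hn _ (Finset.mem_image.mpr ⟨(f, g), Finset.mem_product.mpr ⟨hf, hg⟩, rfl⟩)
  rw [unionShifts_union] at hAB
  have hA : f + n + g ∈ unionShifts A N := hAB.resolve_right (add_comm g (f + n) ▸ hgB)
  exact unionShifts_mono_right (add_le_add_left (Finset.le_sup (f := id) hg) N)
    (mem_unionShifts_of_add_mem hA)

lemma mem_PSstar_iff {A : Set ℕ+} : A ∈ PSstar ↔ ¬ PiecewiseSyndetic Aᶜ := by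
  refine ⟨fun hA hAc => ?_, fun hAc B hB => ?_⟩
  · obtain ⟨x, hx, hxc⟩ := hA _ hAc
    exact hxc hx
  · by_contra hAB
    exact hAc (hB.mono fun x hx hxA => hAB ⟨x, hxA, hx⟩)

lemma isFilterFamily_PSstar : IsFilterFamily PSstar := by
  refine ⟨fun A B hA hAB => ?_, fun A B hA hB => ?_⟩
  · rw [mem_PSstar_iff] at hA ⊢
    exact fun hB => hA (hB.mono (Set.compl_subset_compl.mpr hAB))
  · rw [mem_PSstar_iff] at hA hB ⊢
    rw [Set.compl_inter]
    exact fun h => hA (h.of_union_of_not hB)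

lemma syndeticFamily_PSstar : SyndeticFamily PSstar := fun A hA => by
  by_contra h
  exact mem_PSstar_iff.mp hA (thick_compl_of_not_syndetic h).piecewiseSyndetic

lemma translationInvariant_PSstar : TranslationInvariant PSstar := fun A hA n => by
  rw [mem_PSstar_iff] at hA ⊢
  exact fun h => hA (PiecewiseSyndetic.of_shiftN (A := Aᶜ) h)

lemma IsFilterFamily.inter_biInter_mem {F : Set (Set ℕ+)} (hF : IsFilterFamily F)
    {A : Set ℕ+} {B : ℕ+ → Set ℕ+} (s : Finset ℕ+) (hA : A ∈ F) (hB : ∀ k ∈ s, B k ∈ F) :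
    A ∩ ⋂ k ∈ s, B k ∈ F := by
  classical
  induction s using Finset.induction_on with
  | empty => simpa using hA
  | insert a s _ ih =>
    rw [Finset.set_biInter_insert, Set.inter_left_comm]
    exact hF.2 (hB a (s.mem_insert_self a)) (ih fun k hk => hB k (s.mem_insert_of_mem hk))

lemma subset_PSstar {𝓕 : Set (Set ℕ+)} (hfil : IsFilterFamily 𝓕) (hsyn : SyndeticFamily 𝓕)
    (hti : TranslationInvariant 𝓕) : 𝓕 ⊆ PSstar := fun A hA => by
  rw [mem_PSstar_iff]
  rintro ⟨N, hN : Thick (unionShifts Aᶜ N)⟩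
  have hC : (unionShifts Aᶜ N)ᶜ ∈ 𝓕 := by
    rw [compl_unionShifts, compl_compl]
    exact hfil.inter_biInter_mem _ hA fun k _ => hti A hA k
  obtain ⟨x, hxC, hx⟩ := (hsyn _ hC).inter_nonempty_of_thick hN
  exact hxC hx

/-- The family `𝒫𝒮*` of thickly syndetic sets is a syndetic, translation-invariant filter,
and every syndetic, translation-invariant filter is contained in `𝒫𝒮*`. -/
theorem PSstar_largest_syndetic_translationInvariant_filter :
    (IsFilterFamily PSstar ∧ SyndeticFamily PSstar ∧ TranslationInvariant PSstar) ∧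
    (∀ 𝓕 : Set (Set ℕ+), IsFilterFamily 𝓕 → SyndeticFamily 𝓕 →
      TranslationInvariant 𝓕 → 𝓕 ⊆ PSstar) :=
  ⟨⟨isFilterFamily_PSstar, syndeticFamily_PSstar, translationInvariant_PSstar⟩,
    fun _ => subset_PSstar⟩
end

section
/- Let (Z_i, R_i), i ∈ ℕ, be a disjoint collection of minimal topological dynamical systems. Then for every minimal system (X, T) and every ε > 0, there exists I ∈ ℕ such that for all i ≥ I and every joining J of (X, T) and (Z_i, R_i), the following holds: for every z ∈ Z_i, the set {x ∈ X | (x, z) ∈ J} is ε-dense in X. -/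
/-! Fix a finite `ε/2`-net `t` of `X`. By minimality every point `c` has a neighbourhood `N`
and, for each `a ∈ t`, a time `m` with `T^m N ⊆ B(a, ε/2)`; finitely many such `N` cover `X`.
If a fiber `J(z)` of a joining misses `B(x, ε)`, it misses some `B(a, ε/2)`, and pulling `z`
back along the surjection `R^m` gives a fiber missing `N`, for any prescribed member `N` of the
cover. Were infinitely many indices bad, we could attach to each member `N_l` of the cover its
own bad index `i_l` and a fiber `J_{i_l}(z_l)` missing `N_l`. Minimality of `∏ₗ Z_{i_l}` makes
the closed invariant set `{(x, w) | ∀ l, (x, w_l) ∈ J_{i_l}}` project onto the product, so some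
`x` lies in every `J_{i_l}(z_l)`; but `x` lies in some `N_l`. -/

open Set

open Function Metric Filter

theorem MinimalMap.eq_univ_of_isClosed_mapsTo {X : Type} [TopologicalSpace X] {T : X → X}
    (hT : MinimalMap T) {A : Set X} (hA : IsClosed A) (hne : A.Nonempty) (hAT : MapsTo T A A) :
    A = univ := by
  obtain ⟨a, ha⟩ := hne
  have horbit : range (fun n : ℕ+ => T^[(n : ℕ)] a) ⊆ A := by
    rintro _ ⟨n, rfl⟩
    exact hAT.iterate n ha
  exact hA.closure_eq.symm.trans ((hT a).mono horbit).closure_eq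

theorem MinimalMap.surjective {X : Type} [TopologicalSpace X] [CompactSpace X] [T2Space X]
    {T : X → X} (hT : MinimalMap T) (hTc : Continuous T) : Surjective T := fun x =>
  eq_univ_iff_forall.1 (hT.eq_univ_of_isClosed_mapsTo (isCompact_range hTc).isClosed
    ⟨T x, x, rfl⟩ (fun _ _ => mem_range_self _)) x

theorem MinimalMap.exists_finite_cover_mapsTo_iterate {X : Type} [TopologicalSpace X]
    [CompactSpace X] {T : X → X} (hT : MinimalMap T) (hTc : Continuous T) {ι : Type*} [Finite ι]
    {V : ι → Set X} (hVo : ∀ a, IsOpen (V a)) (hVne : ∀ a, (V a).Nonempty) :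
    ∃ 𝒩 : Finset (Set X), ⋃₀ (𝒩 : Set (Set X)) = univ ∧
      ∀ N ∈ 𝒩, ∀ a, ∃ m : ℕ, MapsTo T^[m] N (V a) := by
  have hvisit : ∀ c a, ∃ m : ℕ, T^[m] c ∈ V a := fun c a => by
    obtain ⟨_, ⟨n, rfl⟩, hn⟩ := (hT c).exists_mem_open (hVo a) (hVne a)
    exact ⟨n, hn⟩
  choose m hm using hvisit
  let N c := ⋂ a, T^[m c a] ⁻¹' V a
  obtain ⟨s, hs⟩ := isCompact_univ.elim_finite_subcover N
    (fun c => isOpen_iInter_of_finite fun a => (hVo a).preimage (hTc.iterate _))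
    (fun c _ => mem_iUnion.2 ⟨c, mem_iInter.2 (hm c)⟩)
  classical
  refine ⟨s.image N, ?_, ?_⟩
  · simpa [eq_univ_iff_forall, subset_def] using hs
  · intro _ hN a
    obtain ⟨c, -, rfl⟩ := Finset.mem_image.1 hN
    exact ⟨m c a, fun x hx => mem_iInter.1 hx a⟩

theorem exists_fiber_disjoint_of_mapsTo_iterate {X Z : Type*} {T : X → X} {R : Z → Z}
    {J : Set (X × Z)} (hJ : MapsTo (Prod.map T R) J J) (hR : Surjective R) {U V : Set X} {m : ℕ}
    (hUV : MapsTo T^[m] U V) {z : Z} (hz : ∀ x, (x, z) ∈ J → x ∉ V) :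
    ∃ z', ∀ x, (x, z') ∈ J → x ∉ U := by
  obtain ⟨z', rfl⟩ := (hR.iterate m) z
  refine ⟨z', fun x hx hxU => hz _ ?_ (hUV hxU)⟩
  simpa using hJ.iterate m hx

theorem exists_forall_mem_of_minimalMap_pi {X : Type} [TopologicalSpace X] [CompactSpace X]
    [Nonempty X] {ι : Type} {Z : ι → Type} [∀ i, TopologicalSpace (Z i)]
    [∀ i, CompactSpace (Z i)] [∀ i, T2Space (Z i)] {T : X → X} {R : ∀ i, Z i → Z i}
    (hR : MinimalMap (Pi.map R)) {J : ∀ i, Set (X × Z i)} (hcl : ∀ i, IsClosed (J i))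
    (hinv : ∀ i, MapsTo (Prod.map T (R i)) (J i) (J i)) (hfst : ∀ i, Prod.fst '' J i = univ)
    (z : ∀ i, Z i) : ∃ x, ∀ i, (x, z i) ∈ J i := by
  let W : Set (X × ∀ i, Z i) := ⋂ i, (fun q => (q.1, q.2 i)) ⁻¹' J i
  have hW : IsClosed W := isClosed_iInter fun i =>
    (hcl i).preimage (continuous_fst.prodMk ((continuous_apply i).comp continuous_snd))
  have hWne : W.Nonempty := by
    have hfiber : ∀ i, ∃ w : Z i, (Classical.arbitrary X, w) ∈ J i := fun i => by
      obtain ⟨⟨_, w⟩, hw, rfl⟩ := (hfst i).symm ▸ mem_univ (Classical.arbitrary X)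
      exact ⟨w, hw⟩
    choose w hw using hfiber
    exact ⟨(_, w), mem_iInter.2 hw⟩
  have hWinv : MapsTo (Prod.map T (Pi.map R)) W W := fun q hq =>
    mem_iInter.2 fun i => hinv i (mem_iInter.1 hq i)
  have hproj := hR.eq_univ_of_isClosed_mapsTo (hW.isCompact.image continuous_snd).isClosed
    (hWne.image _) (Semiconj.mapsTo_image (f := Prod.snd) (fun _ => rfl) hWinv)
  obtain ⟨q, hq, rfl⟩ := hproj.symm ▸ mem_univ z
  exact ⟨q.1, mem_iInter.1 hq⟩

theorem joinings_eventually_dense_fibers_general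
    (Z : ℕ+ → Type) [∀ i, MetricSpace (Z i)] [∀ i, CompactSpace (Z i)]
    (R : ∀ i, Z i → Z i) (hRc : ∀ i, Continuous (R i)) (hRmin : ∀ i, MinimalMap (R i))
    (hdisj : ∀ I : Finset ℕ+, I.Nonempty →
      MinimalMap (fun z : (∀ i : {j : ℕ+ // j ∈ I}, Z i.1) => fun i => R i.1 (z i)))
    (X : Type) [MetricSpace X] [CompactSpace X] [Nonempty X]
    (T : X → X) (hTc : Continuous T) (hTmin : MinimalMap T)
    (ε : ℝ) (hε : 0 < ε) :
    ∃ I : ℕ+, ∀ i : ℕ+, I ≤ i →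
      ∀ J : Set (X × Z i),
        J.Nonempty → IsClosed J →
        (∀ q ∈ J, (T q.1, R i q.2) ∈ J) →
        Prod.fst '' J = Set.univ → Prod.snd '' J = Set.univ →
        ∀ z : Z i, ∀ x : X, ∃ x' : X, (x', z) ∈ J ∧ dist x x' ≤ ε := by
  obtain ⟨t, -, htfin, hnet⟩ :=
    finite_cover_balls_of_compact (isCompact_univ (X := X)) (half_pos hε)
  have := htfin.to_subtype
  obtain ⟨𝒩, h𝒩, hreturn⟩ := hTmin.exists_finite_cover_mapsTo_iterate hTc
    (V := fun a : t => ball (a : X) (ε / 2)) (fun _ => isOpen_ball)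
    (fun _ => nonempty_ball.2 (half_pos hε))
  by_contra! hbad
  obtain ⟨I, hIbad, hIcard⟩ := (frequently_cofinite_iff_infinite.1
    ((frequently_atTop.2 hbad).filter_mono atTop_le_cofinite)).exists_subset_card_eq 𝒩.card
  choose J _ hJcl hJinv hJfst _ z x hhole using fun i : I => hIbad i.2
  let e := Finset.equivOfCardEq hIcard
  have havoid : ∀ i : I, ∃ z', ∀ y, (y, z') ∈ J i → y ∉ (e i : Set X) := fun i => by
    obtain ⟨a, ha, hxa⟩ := mem_iUnion₂.1 (hnet (mem_univ (x i)))
    obtain ⟨m, hm⟩ := hreturn _ (e i).2 ⟨a, ha⟩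
    refine exists_fiber_disjoint_of_mapsTo_iterate (hJinv i) ((hRmin i).surjective (hRc i)) hm
      fun y hy hya => (hhole i y hy).not_ge ?_
    linarith [dist_triangle_right (x i) y a, mem_ball.1 hxa, mem_ball.1 hya]
  choose z' hz' using havoid
  have hI : I.Nonempty := Finset.card_pos.1
    (hIcard ▸ Finset.card_pos.2 (Finset.coe_nonempty.1 (Nonempty.of_sUnion_eq_univ h𝒩)))
  obtain ⟨y, hy⟩ := exists_forall_mem_of_minimalMap_pi (hdisj I hI) hJcl hJinv hJfst z'
  obtain ⟨N, hN, hyN⟩ := mem_sUnion.1 (h𝒩.symm ▸ mem_univ y)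
  exact hz' (e.symm ⟨N, hN⟩) y (hy _) (by simpa using hyN)

/-- **Theorem (Bessel-type disjointness).** Let `(Z i, R i)`, `i ∈ ℕ`, be a disjoint
collection of minimal systems (every finite product is minimal).  For every minimal system
`(X, T)` and every `ε > 0`, there is an index `I` such that for all `i ≥ I` and every
joining `J` of `(X, T)` and `(Z i, R i)` (a nonempty closed invariant subset of the product
with full projections), for every `z : Z i`, the slice `{x | (x, z) ∈ J}` is `ε`-dense. -/
theorem joinings_eventually_dense_fibers
    (Z : ℕ+ → Type) [∀ i, MetricSpace (Z i)] [∀ i, CompactSpace (Z i)]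
    [∀ i, Nonempty (Z i)]
    (R : ∀ i, Z i → Z i) (hRc : ∀ i, Continuous (R i)) (hRmin : ∀ i, MinimalMap (R i))
    (hdisj : ∀ I : Finset ℕ+, I.Nonempty →
      MinimalMap (fun z : (∀ i : {j : ℕ+ // j ∈ I}, Z i.1) => fun i => R i.1 (z i)))
    (X : Type) [MetricSpace X] [CompactSpace X] [Nonempty X]
    (T : X → X) (hTc : Continuous T) (hTmin : MinimalMap T)
    (ε : ℝ) (hε : 0 < ε) :
    ∃ I : ℕ+, ∀ i : ℕ+, I ≤ i →
      ∀ J : Set (X × Z i),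
        J.Nonempty → IsClosed J →
        (∀ q ∈ J, (T q.1, R i q.2) ∈ J) →
        Prod.fst '' J = Set.univ → Prod.snd '' J = Set.univ →
        ∀ z : Z i, ∀ x : X, ∃ x' : X, (x', z) ∈ J ∧ dist x x' ≤ ε :=
  joinings_eventually_dense_fibers_general Z R hRc hRmin hdisj X T hTc hTmin ε hε
end
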